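/- arXiv:2306.14197 — 4 statements merged into one kernel-verified Lean document; each statement's English description precedes it below -/
import Mathlib

section
/- Let A be a complex n×n matrix whose numerical range W(A) = {x*Ax : ‖x‖₂ = 1} satisfies sup_{z ∈ W(A)} Re(z) = μ < 0. Then for every real x, the matrix A ± ixI is invertible and ‖(A ± ixI)⁻¹‖₂ ≤ (1 + √2) · sup_{z ∈ W(A)} |1/(z ± ix)|. -/
open scoped Matrix.Norms.L2Operator
open Matrix

/-- The numerical range of a complex `n×n` matrix `A`:
`W(A) = {⟪x, Ax⟫ : ‖x‖₂ = 1}`. -/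
def numericalRange {n : ℕ} (A : Matrix (Fin n) (Fin n) ℂ) : Set ℂ :=
  {z | ∃ x : EuclideanSpace ℂ (Fin n), ‖x‖ = 1 ∧
    z = inner ℂ x (Matrix.toEuclideanLin A x)}

/-- A matrix whose associated operator is bounded below is invertible, and the
norm of its inverse is bounded by the lower-bound constant. -/
lemma key_aux {n : ℕ} (B : Matrix (Fin n) (Fin n) ℂ) (M : ℝ) (hM : 0 ≤ M)
    (h : ∀ v : EuclideanSpace ℂ (Fin n), ‖v‖ ≤ M * ‖Matrix.toEuclideanLin B v‖) :
    IsUnit B ∧ ‖B⁻¹‖ ≤ M := by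
  have hinj : Function.Injective B.mulVec := by
    intro a b hab
    have h0 : B *ᵥ (a - b) = 0 := by
      rw [Matrix.mulVec_sub, hab, sub_self]
    have h1 := h ((WithLp.equiv 2 (Fin n → ℂ)).symm (a - b))
    erw [Matrix.toEuclideanLin_apply_piLp_toLp, h0] at h1
    simp at h1
    have h2 := sub_eq_zero.mp (sub_eq_zero.mpr (sub_eq_zero.mp h1))
    exact (WithLp.equiv 2 (Fin n → ℂ)).symm.injective h2
  have hunit : IsUnit B := Matrix.mulVec_injective_iff_isUnit.mp hinj
  refine ⟨hunit, ?_⟩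
  rw [Matrix.l2_opNorm_def]
  refine ContinuousLinearMap.opNorm_le_bound _ hM ?_
  intro w
  have hBw : Matrix.toEuclideanLin B (Matrix.toEuclideanLin B⁻¹ w) = w := by
    rw [Matrix.toEuclideanLin_apply, Matrix.toEuclideanLin_apply]
    simp only [Equiv.apply_symm_apply]
    rw [Matrix.mulVec_mulVec, Matrix.mul_nonsing_inv B (Matrix.isUnit_iff_isUnit_det B |>.mp hunit),
      Matrix.one_mulVec]
  calc ‖(Matrix.toEuclideanLin.trans LinearMap.toContinuousLinearMap) B⁻¹ w‖
      = ‖Matrix.toEuclideanLin B⁻¹ w‖ := rfl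
    _ ≤ M * ‖Matrix.toEuclideanLin B (Matrix.toEuclideanLin B⁻¹ w)‖ := h _
    _ = M * ‖w‖ := by rw [hBw]

/-- Main auxiliary lemma: the statement for `A + c•1` with `c` purely imaginary. -/
lemma main_aux {n : ℕ} (A : Matrix (Fin n) (Fin n) ℂ) (μ : ℝ)
    (hμ : IsLUB (Complex.re '' numericalRange A) μ) (hμ0 : μ < 0) (c : ℂ) (hc : c.re = 0) :
    IsUnit (A + c • (1 : Matrix (Fin n) (Fin n) ℂ)) ∧
    ‖(A + c • (1 : Matrix (Fin n) (Fin n) ℂ))⁻¹‖ ≤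
      (1 + Real.sqrt 2) *
        sSup ((fun z : ℂ => ‖1 / (z + c)‖) '' numericalRange A) := by
  -- the numerical range is nonempty
  have hne : (numericalRange A).Nonempty := by
    by_contra hemp
    rw [Set.not_nonempty_iff_eq_empty] at hemp
    have : μ ≤ μ - 1 := hμ.2 (by simp [hemp, upperBounds])
    linarith
  set S : Set ℝ := (fun z : ℂ => ‖1 / (z + c)‖) '' numericalRange A with hS
  have hSne : S.Nonempty := hne.image _
  -- each point of the numerical range has real part ≤ μ, hence |z + c| ≥ -μ
  have hzre : ∀ z ∈ numericalRange A, z.re ≤ μ := fun z hz => hμ.1 ⟨z, hz, rfl⟩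
  have habs : ∀ z ∈ numericalRange A, -μ ≤ ‖z + c‖ := by
    intro z hz
    have h1 : |(z + c).re| ≤ ‖z + c‖ := Complex.abs_re_le_norm _
    have h2 : (z + c).re = z.re := by simp [Complex.add_re, hc]
    have h3 : -μ ≤ |(z + c).re| := by
      rw [h2]
      calc -μ ≤ -z.re := by linarith [hzre z hz]
        _ ≤ |z.re| := by rw [abs_eq_max_neg]; exact le_max_right _ _
    linarith
  have hSbdd : BddAbove S := by
    refine ⟨(-μ)⁻¹, ?_⟩
    rintro r ⟨z, hz, rfl⟩
    simp only [one_div, map_inv₀, norm_inv]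
    exact inv_anti₀ (by linarith) (habs z hz)
  set M : ℝ := sSup S with hM
  have hMmem : ∀ z ∈ numericalRange A, (‖z + c‖)⁻¹ ≤ M := by
    intro z hz
    refine le_csSup hSbdd ⟨z, hz, ?_⟩
    simp only [one_div, map_inv₀, norm_inv]
  have hM0 : 0 ≤ M := by
    obtain ⟨z, hz⟩ := hne
    exact le_trans (inv_nonneg.mpr (norm_nonneg _)) (hMmem z hz)
  set B : Matrix (Fin n) (Fin n) ℂ := A + c • 1 with hB
  -- the key lower bound
  have hkey : ∀ v : EuclideanSpace ℂ (Fin n), ‖v‖ ≤ M * ‖Matrix.toEuclideanLin B v‖ := by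
    intro v
    rcases eq_or_ne v 0 with rfl | hv
    · simp [hM0]
    · set u : EuclideanSpace ℂ (Fin n) := (‖v‖ : ℂ)⁻¹ • v with hu
      have hvn : (0:ℝ) < ‖v‖ := norm_pos_iff.mpr hv
      have hun : ‖u‖ = 1 := by
        rw [hu, norm_smul]
        simp [abs_of_pos hvn, hvn.ne']
      set z : ℂ := inner ℂ u (Matrix.toEuclideanLin A u) with hz
      have hzmem : z ∈ numericalRange A := ⟨u, hun, rfl⟩
      have hinner : (inner ℂ u (Matrix.toEuclideanLin B u) : ℂ) = z + c := by
        rw [hB, map_add, LinearMap.add_apply, inner_add_right]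
        congr 1
        have h1 : Matrix.toEuclideanLin (c • (1 : Matrix (Fin n) (Fin n) ℂ)) u = c • u := by
          have hone : Matrix.toEuclideanLin (1 : Matrix (Fin n) (Fin n) ℂ) u = u := by
            rw [Matrix.toEuclideanLin_apply]
            simp [Matrix.one_mulVec]
          have hsm := _root_.map_smul
            (Matrix.toEuclideanLin (𝕜 := ℂ) (m := Fin n) (n := Fin n)) c
            (1 : Matrix (Fin n) (Fin n) ℂ)
          calc Matrix.toEuclideanLin (c • (1 : Matrix (Fin n) (Fin n) ℂ)) u
              = (c • Matrix.toEuclideanLin (1 : Matrix (Fin n) (Fin n) ℂ)) u := by rw [hsm]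
            _ = c • u := by rw [LinearMap.smul_apply, hone]
        rw [h1, inner_smul_right]
        have : (inner ℂ u u : ℂ) = 1 := by
          rw [inner_self_eq_norm_sq_to_K, hun]; norm_num
        rw [this, mul_one]
      have habs' : ‖z + c‖ ≤ ‖Matrix.toEuclideanLin B u‖ := by
        calc ‖z + c‖ = ‖(inner ℂ u (Matrix.toEuclideanLin B u) : ℂ)‖ := by
              rw [hinner]
          _ ≤ ‖u‖ * ‖Matrix.toEuclideanLin B u‖ := norm_inner_le_norm _ _
          _ = ‖Matrix.toEuclideanLin B u‖ := by rw [hun, one_mul]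
      have habs0 : (0:ℝ) < ‖z + c‖ := lt_of_lt_of_le (by linarith) (habs z hzmem)
      have h1le : 1 ≤ M * ‖Matrix.toEuclideanLin B u‖ := by
        calc (1:ℝ) = (‖z + c‖)⁻¹ * ‖z + c‖ := by
              rw [inv_mul_cancel₀ habs0.ne']
          _ ≤ M * ‖Matrix.toEuclideanLin B u‖ :=
              mul_le_mul (hMmem z hzmem) habs' habs0.le hM0
      have hvu : Matrix.toEuclideanLin B v = (‖v‖ : ℂ) • Matrix.toEuclideanLin B u := by
        have hv' : v = (‖v‖ : ℂ) • u := by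
          rw [hu, smul_smul, mul_inv_cancel₀ (by exact_mod_cast hvn.ne'), one_smul]
        conv_lhs => rw [hv']
        rw [_root_.map_smul]
      calc ‖v‖ = ‖v‖ * 1 := (mul_one _).symm
        _ ≤ ‖v‖ * (M * ‖Matrix.toEuclideanLin B u‖) := by
            exact mul_le_mul_of_nonneg_left h1le hvn.le
        _ = M * ‖Matrix.toEuclideanLin B v‖ := by
            rw [hvu, norm_smul]
            simp [abs_of_pos hvn]
            ring
  obtain ⟨hunit, hbound⟩ := key_aux B M hM0 hkey
  refine ⟨hunit, le_trans hbound ?_⟩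
  nlinarith [Real.sqrt_nonneg 2, hM0]

/-- If the numerical range of `A` satisfies `sup_{z ∈ W(A)} Re z = μ < 0`, then for every
real `x` the matrices `A ± ixI` are invertible and
`‖(A ± ixI)⁻¹‖₂ ≤ (1 + √2) · sup_{z ∈ W(A)} |1/(z ± ix)|`. -/
theorem stmt8 {n : ℕ} (A : Matrix (Fin n) (Fin n) ℂ) (μ : ℝ)
    (hμ : IsLUB (Complex.re '' numericalRange A) μ) (hμ0 : μ < 0) (x : ℝ) :
    IsUnit (A + (Complex.I * x) • (1 : Matrix (Fin n) (Fin n) ℂ)) ∧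
    IsUnit (A - (Complex.I * x) • (1 : Matrix (Fin n) (Fin n) ℂ)) ∧
    ‖(A + (Complex.I * x) • (1 : Matrix (Fin n) (Fin n) ℂ))⁻¹‖ ≤
      (1 + Real.sqrt 2) *
        sSup ((fun z : ℂ => ‖1 / (z + Complex.I * x)‖) '' numericalRange A) ∧
    ‖(A - (Complex.I * x) • (1 : Matrix (Fin n) (Fin n) ℂ))⁻¹‖ ≤
      (1 + Real.sqrt 2) *
        sSup ((fun z : ℂ => ‖1 / (z - Complex.I * x)‖) '' numericalRange A) := by
  have h1 := main_aux A μ hμ hμ0 (Complex.I * x) (by simp)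
  have h2 := main_aux A μ hμ hμ0 (-(Complex.I * x)) (by simp)
  have e1 : A - (Complex.I * x) • (1 : Matrix (Fin n) (Fin n) ℂ)
      = A + (-(Complex.I * x)) • (1 : Matrix (Fin n) (Fin n) ℂ) := by
    rw [neg_smul, sub_eq_add_neg]
  have e2 : (fun z : ℂ => ‖1 / (z - Complex.I * x)‖)
      = fun z : ℂ => ‖1 / (z + -(Complex.I * x))‖ := by
    funext z; rw [sub_eq_add_neg]
  rw [e1, e2]
  exact ⟨h1.1, h2.1, h1.2, h2.2⟩
end

section
/- Let A be a complex n×n matrix with numerical range contained in {Re(z) ≤ μ} for some μ < 0. Then max over x ≥ 0 of ‖(A + ixI)⁻¹‖₂ is at most (1 + √2)/|μ|. -/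
open scoped Matrix.Norms.L2Operator

theorem aux_re {n : ℕ} (A : Matrix (Fin n) (Fin n) ℂ) (μ : ℝ)
    (hW : numericalRange A ⊆ {z : ℂ | z.re ≤ μ}) (v : EuclideanSpace ℂ (Fin n)) :
    (inner ℂ v (Matrix.toEuclideanLin A v) : ℂ).re ≤ μ * ‖v‖ ^ 2 := by
  rcases eq_or_ne v 0 with rfl | hv
  · simp
  · have hnv : (0:ℝ) < ‖v‖ := norm_pos_iff.mpr hv
    set u : EuclideanSpace ℂ (Fin n) := (‖v‖⁻¹ : ℂ) • v with hu
    have hun : ‖u‖ = 1 := by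
      simp [hu, norm_smul, inv_mul_cancel₀ hnv.ne']
    have hmem : (inner ℂ u (Matrix.toEuclideanLin A u) : ℂ) ∈ numericalRange A :=
      ⟨u, hun, rfl⟩
    have h1 := hW hmem
    simp only [Set.mem_setOf_eq] at h1
    have hrel : (inner ℂ u (Matrix.toEuclideanLin A u) : ℂ) =
        (‖v‖⁻¹ : ℂ) ^ 2 * inner ℂ v (Matrix.toEuclideanLin A v) := by
      simp only [hu, map_smul, inner_smul_left, inner_smul_right, map_inv₀,
        Complex.conj_ofReal]
      ring
    rw [hrel] at h1
    have h2 : ((‖v‖⁻¹ : ℂ)) ^ 2 = ((‖v‖⁻¹ ^ 2 : ℝ) : ℂ) := by push_cast; ring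
    rw [h2, Complex.re_ofReal_mul] at h1
    have h3 : ‖v‖⁻¹ ^ 2 = (‖v‖ ^ 2)⁻¹ := by rw [inv_pow]
    rw [h3] at h1
    have h4 : (0:ℝ) < ‖v‖ ^ 2 := by positivity
    calc (inner ℂ v (Matrix.toEuclideanLin A v) : ℂ).re
        = ‖v‖ ^ 2 * ((‖v‖ ^ 2)⁻¹ * (inner ℂ v (Matrix.toEuclideanLin A v) : ℂ).re) := by
          field_simp
      _ ≤ ‖v‖ ^ 2 * μ := by exact mul_le_mul_of_nonneg_left h1 h4.le
      _ = μ * ‖v‖ ^ 2 := mul_comm _ _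

theorem aux_lb {n : ℕ} (A : Matrix (Fin n) (Fin n) ℂ) (μ : ℝ) (hμ0 : μ < 0)
    (hW : numericalRange A ⊆ {z : ℂ | z.re ≤ μ}) (x : ℝ)
    (v : EuclideanSpace ℂ (Fin n)) :
    |μ| * ‖v‖ ≤ ‖Matrix.toEuclideanLin (A + (Complex.I * x) • (1 : Matrix (Fin n) (Fin n) ℂ)) v‖ := by
  set B := A + (Complex.I * x) • (1 : Matrix (Fin n) (Fin n) ℂ) with hB
  have hone : Matrix.toEuclideanLin (1 : Matrix (Fin n) (Fin n) ℂ) v = v := by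
    rw [Matrix.toEuclideanLin_apply, Matrix.one_mulVec]
  have hTB : Matrix.toEuclideanLin B v
      = Matrix.toEuclideanLin A v + (Complex.I * x) • v := by
    rw [hB, map_add, map_smul]
    simp [hone]
  have hre : (inner ℂ v (Matrix.toEuclideanLin B v) : ℂ).re
      = (inner ℂ v (Matrix.toEuclideanLin A v) : ℂ).re := by
    rw [hTB, inner_add_right, inner_smul_right, inner_self_eq_norm_sq_to_K]
    simp [Complex.add_re, Complex.mul_re, ← Complex.ofReal_pow]
  have h1 : (inner ℂ v (Matrix.toEuclideanLin B v) : ℂ).re ≤ μ * ‖v‖ ^ 2 := by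
    rw [hre]; exact aux_re A μ hW v
  have h2 : |μ| * ‖v‖ ^ 2 ≤ ‖(inner ℂ v (Matrix.toEuclideanLin B v) : ℂ)‖ := by
    have habs : |μ| * ‖v‖ ^ 2 ≤ -(inner ℂ v (Matrix.toEuclideanLin B v) : ℂ).re := by
      rw [abs_of_neg hμ0]; nlinarith [sq_nonneg ‖v‖]
    calc |μ| * ‖v‖ ^ 2 ≤ -(inner ℂ v (Matrix.toEuclideanLin B v) : ℂ).re := habs
      _ ≤ |(inner ℂ v (Matrix.toEuclideanLin B v) : ℂ).re| := neg_le_abs _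
      _ ≤ ‖(inner ℂ v (Matrix.toEuclideanLin B v) : ℂ)‖ := Complex.abs_re_le_norm _
  have h3 : ‖(inner ℂ v (Matrix.toEuclideanLin B v) : ℂ)‖
      ≤ ‖v‖ * ‖Matrix.toEuclideanLin B v‖ := norm_inner_le_norm _ _
  rcases eq_or_ne v 0 with rfl | hv
  · simp
  · have hnv : (0:ℝ) < ‖v‖ := norm_pos_iff.mpr hv
    have := h2.trans h3
    nlinarith

/-- If the numerical range of `A` is contained in `{Re z ≤ μ}` for some `μ < 0`, then
for every `x ≥ 0`, `A + ixI` is invertible and `‖(A + ixI)⁻¹‖₂ ≤ (1 + √2)/|μ|`. -/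
theorem stmt10 {n : ℕ} (A : Matrix (Fin n) (Fin n) ℂ) (μ : ℝ) (hμ0 : μ < 0)
    (hW : numericalRange A ⊆ {z : ℂ | z.re ≤ μ}) (x : ℝ) (hx : 0 ≤ x) :
    IsUnit (A + (Complex.I * x) • (1 : Matrix (Fin n) (Fin n) ℂ)) ∧
      ‖(A + (Complex.I * x) • (1 : Matrix (Fin n) (Fin n) ℂ))⁻¹‖ ≤
        (1 + Real.sqrt 2) / |μ| := by
  set B := A + (Complex.I * x) • (1 : Matrix (Fin n) (Fin n) ℂ) with hB
  have hμ : (0:ℝ) < |μ| := abs_pos.mpr hμ0.ne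
  have hlb := aux_lb A μ hμ0 hW x
  -- invertibility
  have hU : IsUnit B := by
    rw [← Matrix.mulVec_injective_iff_isUnit]
    intro a b hab
    have hz : B.mulVec (a - b) = 0 := by
      rw [Matrix.mulVec_sub, hab, sub_self]
    set v : EuclideanSpace ℂ (Fin n) := (WithLp.equiv 2 (Fin n → ℂ)).symm (a - b) with hv
    have hBv : Matrix.toEuclideanLin B v = 0 := by
      rw [hv, WithLp.equiv_symm_apply, Matrix.toEuclideanLin_apply_piLp_toLp, hz]
      simp
    have := hlb v
    rw [hBv, norm_zero] at this
    have hv0 : v = 0 := by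
      have : ‖v‖ ≤ 0 := by nlinarith
      exact norm_le_zero_iff.mp this
    have : a - b = 0 := by
      simpa [hv] using congrArg (WithLp.equiv 2 (Fin n → ℂ)) hv0
    exact sub_eq_zero.mp this
  refine ⟨hU, ?_⟩
  have hdet : IsUnit B.det := (Matrix.isUnit_iff_isUnit_det B).mp hU
  have hnorm : ‖B⁻¹‖ ≤ 1 / |μ| := by
    rw [Matrix.l2_opNorm_def]
    refine ContinuousLinearMap.opNorm_le_bound _ (by positivity) fun y => ?_
    set v : EuclideanSpace ℂ (Fin n) := Matrix.toEuclideanLin B⁻¹ y with hv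
    have hBv : Matrix.toEuclideanLin B v = y := by
      rw [hv, Matrix.toEuclideanLin_apply, Matrix.toEuclideanLin_apply]
      simp only [Equiv.apply_symm_apply]
      rw [Matrix.mulVec_mulVec, Matrix.mul_nonsing_inv B hdet, Matrix.one_mulVec]
    have h := hlb v
    rw [hBv] at h
    have : ‖v‖ ≤ 1 / |μ| * ‖y‖ := by
      rw [div_mul_eq_mul_div, le_div_iff₀ hμ]
      nlinarith
    exact this
  have hfinal : 1 / |μ| ≤ (1 + Real.sqrt 2) / |μ| := by
    gcongr
    nlinarith [Real.sqrt_nonneg 2]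
  exact hnorm.trans hfinal
end

section
/- With v(t) = −2t − α(1 − e^{−t}) − β(e^t − 1), the limit as t → 0 of the derivative of t/(1 − e^{v(t)}) equals (α² + 2αβ + 5α + β² + 3β + 4)/(2(α² + 2αβ + 4α + β² + 4β + 4)). -/
open scoped Topology

open Real Filter

section aux

variable (α β : ℝ)

noncomputable def sV (t : ℝ) : ℝ := -2 * t - α * (1 - Real.exp (-t)) - β * (Real.exp t - 1)
noncomputable def sV1 (t : ℝ) : ℝ := -2 - α * Real.exp (-t) - β * Real.exp t
noncomputable def sV2 (t : ℝ) : ℝ := α * Real.exp (-t) - β * Real.exp t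
noncomputable def sV3 (t : ℝ) : ℝ := -α * Real.exp (-t) - β * Real.exp t

noncomputable def sN (t : ℝ) : ℝ :=
  1 - Real.exp (sV α β t) + t * sV1 α β t * Real.exp (sV α β t)
noncomputable def sD (t : ℝ) : ℝ := (1 - Real.exp (sV α β t)) ^ 2
noncomputable def sG (t : ℝ) : ℝ := Real.exp (sV α β t) * (sV2 α β t + sV1 α β t ^ 2)
noncomputable def sG1 (t : ℝ) : ℝ :=
  sV1 α β t * Real.exp (sV α β t) * (sV2 α β t + sV1 α β t ^ 2) +
    Real.exp (sV α β t) * (sV3 α β t + 2 * sV1 α β t * sV2 α β t)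
noncomputable def sN1 (t : ℝ) : ℝ := t * sG α β t
noncomputable def sD1 (t : ℝ) : ℝ :=
  2 * (1 - Real.exp (sV α β t)) * (-(sV1 α β t) * Real.exp (sV α β t))
noncomputable def sN2 (t : ℝ) : ℝ := sG α β t + t * sG1 α β t
noncomputable def sD2 (t : ℝ) : ℝ :=
  2 * ((sV1 α β t * Real.exp (sV α β t)) * (sV1 α β t * Real.exp (sV α β t)) -
    (1 - Real.exp (sV α β t)) * sG α β t)

lemma hasDerivAt_expneg (t : ℝ) :
    HasDerivAt (fun t : ℝ => Real.exp (-t)) (-Real.exp (-t)) t := by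
  simpa [Function.comp_def] using ((Real.hasDerivAt_exp (-t)).comp t (hasDerivAt_neg t))

lemma hasDerivAt_sV (t : ℝ) : HasDerivAt (sV α β) (sV1 α β t) t := by
  unfold sV sV1
  have h := ((hasDerivAt_id' (x := t)).const_mul (-2:ℝ)).sub
    (((hasDerivAt_expneg t).const_sub 1).const_mul α) |>.sub
    (((Real.hasDerivAt_exp t).sub_const 1).const_mul β)
  exact h.congr_deriv (by ring)

lemma hasDerivAt_sV1 (t : ℝ) : HasDerivAt (sV1 α β) (sV2 α β t) t := by
  unfold sV1 sV2
  have h := (((hasDerivAt_expneg t).const_mul α).const_sub (-2:ℝ)).sub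
    ((Real.hasDerivAt_exp t).const_mul β)
  exact h.congr_deriv (by ring)

lemma hasDerivAt_sV2 (t : ℝ) : HasDerivAt (sV2 α β) (sV3 α β t) t := by
  unfold sV2 sV3
  have h := ((hasDerivAt_expneg t).const_mul α).sub ((Real.hasDerivAt_exp t).const_mul β)
  exact h.congr_deriv (by ring)

lemma hasDerivAt_expV (t : ℝ) :
    HasDerivAt (fun t => Real.exp (sV α β t)) (sV1 α β t * Real.exp (sV α β t)) t := by
  simpa [mul_comm] using (hasDerivAt_sV α β t).exp

lemma hasDerivAt_sN (t : ℝ) : HasDerivAt (sN α β) (sN1 α β t) t := by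
  unfold sN sN1 sG
  have h := ((hasDerivAt_expV α β t).const_sub 1).add
    (((hasDerivAt_id' (x := t)).mul (hasDerivAt_sV1 α β t)).mul (hasDerivAt_expV α β t))
  exact h.congr_deriv (by simp only [Pi.mul_apply, Pi.add_apply, Pi.neg_apply, Pi.pow_apply]; ring)

lemma hasDerivAt_sD (t : ℝ) : HasDerivAt (sD α β) (sD1 α β t) t := by
  unfold sD sD1
  have h := ((hasDerivAt_expV α β t).const_sub 1).pow 2
  exact h.congr_deriv (by ring)

lemma hasDerivAt_sG (t : ℝ) : HasDerivAt (sG α β) (sG1 α β t) t := by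
  unfold sG sG1
  have h := (hasDerivAt_expV α β t).mul
    ((hasDerivAt_sV2 α β t).add ((hasDerivAt_sV1 α β t).pow 2))
  exact h.congr_deriv (by simp only [Pi.mul_apply, Pi.add_apply, Pi.neg_apply, Pi.pow_apply]; ring)

lemma hasDerivAt_sN1 (t : ℝ) : HasDerivAt (sN1 α β) (sN2 α β t) t := by
  unfold sN1 sN2
  have h := (hasDerivAt_id' (x := t)).mul (hasDerivAt_sG α β t)
  exact h.congr_deriv (by ring)

lemma hasDerivAt_sD1 (t : ℝ) : HasDerivAt (sD1 α β) (sD2 α β t) t := by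
  unfold sD1 sD2 sG
  have h := (((hasDerivAt_expV α β t).const_sub 1).const_mul (2:ℝ)).mul
    (((hasDerivAt_sV1 α β t).neg).mul (hasDerivAt_expV α β t))
  exact h.congr_deriv (by simp only [Pi.mul_apply, Pi.add_apply, Pi.neg_apply, Pi.pow_apply]; ring)

end aux

/-- With `v(t) = −2t − α(1 − e^{−t}) − β(e^t − 1)`, the limit as `t → 0` of the derivative
of `t ↦ t/(1 − e^{v(t)})` equals
`(α² + 2αβ + 5α + β² + 3β + 4)/(2(α² + 2αβ + 4α + β² + 4β + 4))`. -/
theorem stmt13 (α β : ℝ) (hα : 0 < α) (hβ : 0 < β)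
    (v : ℝ → ℝ)
    (hv : ∀ t, v t = -2 * t - α * (1 - Real.exp (-t)) - β * (Real.exp t - 1)) :
    Filter.Tendsto (fun t : ℝ => deriv (fun s : ℝ => s / (1 - Real.exp (v s))) t)
      (𝓝[≠] 0)
      (𝓝 ((α ^ 2 + 2 * α * β + 5 * α + β ^ 2 + 3 * β + 4) /
        (2 * (α ^ 2 + 2 * α * β + 4 * α + β ^ 2 + 4 * β + 4)))) := by
  have hveq : v = sV α β := funext fun t => by rw [hv]; rfl
  subst hveq
  -- basic facts
  have hV0 : sV α β 0 = 0 := by simp [sV]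
  have hV1neg : ∀ t, sV1 α β t < 0 := by
    intro t
    have h1 : 0 < α * Real.exp (-t) := mul_pos hα (Real.exp_pos _)
    have h2 : 0 < β * Real.exp t := mul_pos hβ (Real.exp_pos _)
    unfold sV1; linarith
  have hVanti : StrictAnti (sV α β) :=
    strictAnti_of_deriv_neg
      (fun t => by rw [(hasDerivAt_sV α β t).deriv]; exact hV1neg t)
  have hVne : ∀ t : ℝ, t ≠ 0 → sV α β t ≠ 0 := by
    intro t ht
    rcases lt_or_gt_of_ne ht with h | h
    · have := hVanti h; rw [hV0] at this; linarith
    · have := hVanti h; rw [hV0] at this; linarith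
  have hExpNe : ∀ t : ℝ, t ≠ 0 → 1 - Real.exp (sV α β t) ≠ 0 := by
    intro t ht h
    have h1 : Real.exp (sV α β t) = Real.exp 0 := by rw [Real.exp_zero]; linarith
    exact hVne t ht (Real.exp_injective h1)
  -- continuity
  have hcV : Continuous (sV α β) :=
    continuous_iff_continuousAt.mpr fun t => (hasDerivAt_sV α β t).differentiableAt.continuousAt
  have hcV1 : Continuous (sV1 α β) :=
    continuous_iff_continuousAt.mpr fun t => (hasDerivAt_sV1 α β t).differentiableAt.continuousAt
  have hcV2 : Continuous (sV2 α β) :=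
    continuous_iff_continuousAt.mpr fun t => (hasDerivAt_sV2 α β t).differentiableAt.continuousAt
  have hcV3 : Continuous (sV3 α β) := by
    unfold sV3
    exact ((continuous_const.mul (Real.continuous_exp.comp continuous_neg))).sub
      (continuous_const.mul Real.continuous_exp)
  have hce : Continuous fun t => Real.exp (sV α β t) := Real.continuous_exp.comp hcV
  have hcontN : Continuous (sN α β) :=
    continuous_iff_continuousAt.mpr fun t => (hasDerivAt_sN α β t).differentiableAt.continuousAt
  have hcontD : Continuous (sD α β) :=
    continuous_iff_continuousAt.mpr fun t => (hasDerivAt_sD α β t).differentiableAt.continuousAt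
  have hcontN1 : Continuous (sN1 α β) :=
    continuous_iff_continuousAt.mpr fun t => (hasDerivAt_sN1 α β t).differentiableAt.continuousAt
  have hcontD1 : Continuous (sD1 α β) :=
    continuous_iff_continuousAt.mpr fun t => (hasDerivAt_sD1 α β t).differentiableAt.continuousAt
  have hcontG : Continuous (sG α β) :=
    continuous_iff_continuousAt.mpr fun t => (hasDerivAt_sG α β t).differentiableAt.continuousAt
  have hcontG1 : Continuous (sG1 α β) := by
    unfold sG1
    exact ((hcV1.mul hce).mul (hcV2.add (hcV1.pow 2))).add
      (hce.mul (hcV3.add ((continuous_const.mul hcV1).mul hcV2)))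
  have hcontN2 : Continuous (sN2 α β) := by
    unfold sN2; exact hcontG.add (continuous_id.mul hcontG1)
  have hcontD2 : Continuous (sD2 α β) := by
    unfold sD2
    exact continuous_const.mul (((hcV1.mul hce).mul (hcV1.mul hce)).sub
      ((continuous_const.sub hce).mul hcontG))
  -- values at 0
  have hV10 : sV1 α β 0 = -(α + β + 2) := by simp [sV1]; ring
  have hN0 : sN α β 0 = 0 := by simp [sN, hV0]
  have hD0 : sD α β 0 = 0 := by simp [sD, hV0]
  have hN10 : sN1 α β 0 = 0 := by simp [sN1]
  have hD10 : sD1 α β 0 = 0 := by simp [sD1, hV0]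
  have hN20 : sN2 α β 0 = (α - β) + (α + β + 2) ^ 2 := by
    simp [sN2, sG, hV0, hV10, sV2]; ring
  have hD20 : sD2 α β 0 = 2 * (α + β + 2) ^ 2 := by
    simp [sD2, hV0, hV10]; ring
  have hD20ne : sD2 α β 0 ≠ 0 := by rw [hD20]; positivity
  -- the limit value
  have hL : sN2 α β 0 / sD2 α β 0 =
      (α ^ 2 + 2 * α * β + 5 * α + β ^ 2 + 3 * β + 4) /
        (2 * (α ^ 2 + 2 * α * β + 4 * α + β ^ 2 + 4 * β + 4)) := by
    rw [hN20, hD20]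
    have h1 : (2:ℝ) * (α + β + 2) ^ 2 = 2 * (α ^ 2 + 2 * α * β + 4 * α + β ^ 2 + 4 * β + 4) := by
      ring
    rw [h1]
    congr 1
    ring
  -- innermost limit : N2/D2
  have hTend2 : Filter.Tendsto (fun t => sN2 α β t / sD2 α β t) (𝓝[≠] (0:ℝ))
      (𝓝 (sN2 α β 0 / sD2 α β 0)) :=
    ((hcontN2.continuousAt.div hcontD2.continuousAt hD20ne).tendsto).mono_left
      nhdsWithin_le_nhds
  rw [hL] at hTend2
  -- second L'Hopital: N1/D1
  have hD2ne : ∀ᶠ t in 𝓝[≠] (0:ℝ), sD2 α β t ≠ 0 :=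
    (hcontD2.continuousAt.eventually_ne hD20ne).filter_mono nhdsWithin_le_nhds
  have hTend1 : Filter.Tendsto (fun t => sN1 α β t / sD1 α β t) (𝓝[≠] (0:ℝ))
      (𝓝 ((α ^ 2 + 2 * α * β + 5 * α + β ^ 2 + 3 * β + 4) /
        (2 * (α ^ 2 + 2 * α * β + 4 * α + β ^ 2 + 4 * β + 4)))) := by
    apply HasDerivAt.lhopital_zero_nhdsNE (f' := sN2 α β) (g' := sD2 α β)
    · exact Filter.Eventually.of_forall fun t => hasDerivAt_sN1 α β t
    · exact Filter.Eventually.of_forall fun t => hasDerivAt_sD1 α β t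
    · exact hD2ne
    · have h := (hcontN1.tendsto 0).mono_left (nhdsWithin_le_nhds (s := {(0:ℝ)}ᶜ))
      rwa [hN10] at h
    · have h := (hcontD1.tendsto 0).mono_left (nhdsWithin_le_nhds (s := {(0:ℝ)}ᶜ))
      rwa [hD10] at h
    · exact hTend2
  -- first L'Hopital: N/D
  have hD1ne : ∀ᶠ t in 𝓝[≠] (0:ℝ), sD1 α β t ≠ 0 := by
    apply Filter.eventually_of_mem self_mem_nhdsWithin
    intro t ht
    have ht' : t ≠ 0 := ht
    unfold sD1
    have h1 := hExpNe t ht'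
    have h2 : -(sV1 α β t) * Real.exp (sV α β t) ≠ 0 :=
      ne_of_gt (mul_pos (neg_pos.mpr (hV1neg t)) (Real.exp_pos _))
    exact mul_ne_zero (mul_ne_zero two_ne_zero h1) h2
  have hTend0 : Filter.Tendsto (fun t => sN α β t / sD α β t) (𝓝[≠] (0:ℝ))
      (𝓝 ((α ^ 2 + 2 * α * β + 5 * α + β ^ 2 + 3 * β + 4) /
        (2 * (α ^ 2 + 2 * α * β + 4 * α + β ^ 2 + 4 * β + 4)))) := by
    apply HasDerivAt.lhopital_zero_nhdsNE (f' := sN1 α β) (g' := sD1 α β)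
    · exact Filter.Eventually.of_forall fun t => hasDerivAt_sN α β t
    · exact Filter.Eventually.of_forall fun t => hasDerivAt_sD α β t
    · exact hD1ne
    · have h := (hcontN.tendsto 0).mono_left (nhdsWithin_le_nhds (s := {(0:ℝ)}ᶜ))
      rwa [hN0] at h
    · have h := (hcontD.tendsto 0).mono_left (nhdsWithin_le_nhds (s := {(0:ℝ)}ᶜ))
      rwa [hD0] at h
    · exact hTend1
  -- finally, deriv f = N/D on punctured neighborhood
  apply hTend0.congr'
  apply Filter.eventually_of_mem self_mem_nhdsWithin
  intro t ht
  have ht' : t ≠ 0 := ht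
  have hden := hExpNe t ht'
  have hd : HasDerivAt (fun s : ℝ => s / (1 - Real.exp (sV α β s)))
      ((1 * (1 - Real.exp (sV α β t)) -
        t * (0 - sV1 α β t * Real.exp (sV α β t))) / (1 - Real.exp (sV α β t)) ^ 2) t :=
    (hasDerivAt_id' (x := t)).div
      ((hasDerivAt_const t (1:ℝ)).sub (hasDerivAt_expV α β t)) hden
  show sN α β t / sD α β t = deriv (fun s : ℝ => s / (1 - Real.exp (sV α β s))) t
  rw [hd.deriv]
  unfold sN sD
  ring
end

section
/- Let v(t) = −2t − α(1 − e^{−t}) − β(e^t − 1) with α, β > 0 and x_h(t) = (π/h)·t/(1 − e^{v(t)}). Then x_h(t) > 0 for all t ∈ ℝ and x_h is strictly increasing... specifically, x_h(t) → 0 as t → −∞ and x_h(t) − (π/h)t → 0 as t → +∞. -/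
open scoped Real Topology Filter

/-- With `v(t) = −2t − α(1 − e^{−t}) − β(e^t − 1)` (`α, β, h > 0`) and
`x_h(t) = (π/h)·t/(1 − e^{v(t)})`: `x_h(t) > 0` for all `t ≠ 0`, `x_h` is strictly
increasing (on `ℝ \ {0}`, across the removable singularity at `0`), `x_h(t) → 0` as
`t → −∞`, and `x_h(t) − (π/h)t → 0` as `t → +∞`. -/
theorem stmt14 (h α β : ℝ) (hh : 0 < h) (hα : 0 < α) (hβ : 0 < β)
    (v : ℝ → ℝ)
    (hv : ∀ t, v t = -2 * t - α * (1 - Real.exp (-t)) - β * (Real.exp t - 1))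
    (xh : ℝ → ℝ) (hxh : ∀ t, xh t = π / h * (t / (1 - Real.exp (v t)))) :
    (∀ t : ℝ, t ≠ 0 → 0 < xh t) ∧
    StrictMonoOn xh {(0 : ℝ)}ᶜ ∧
    Filter.Tendsto xh Filter.atBot (𝓝 0) ∧
    Filter.Tendsto (fun t : ℝ => xh t - π / h * t) Filter.atTop (𝓝 0) := by
  have hve : v = fun t => -2 * t - α * (1 - Real.exp (-t)) - β * (Real.exp t - 1) := funext hv
  set w : ℝ → ℝ := fun t => -2 - α * Real.exp (-t) - β * Real.exp t with hw
  -- derivative of v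
  have hdv : ∀ t, HasDerivAt v (w t) t := by
    intro t
    rw [hve]
    have h1 : HasDerivAt (fun s : ℝ => Real.exp (-s)) (-Real.exp (-t)) t := by
      simpa [Function.comp_def] using (Real.hasDerivAt_exp (-t)).comp t ((hasDerivAt_id t).neg)
    have h2 : HasDerivAt (fun s : ℝ => Real.exp s) (Real.exp t) t := Real.hasDerivAt_exp t
    have := (((hasDerivAt_id t).const_mul (-2)).sub
        (((h1.const_sub 1)).const_mul α)).sub ((h2.sub_const 1).const_mul β)
    exact this.congr_deriv (by simp only [hw]; ring)
  have hv0 : v 0 = 0 := by simp [hv 0]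
  -- sign of v
  have hvneg : ∀ t : ℝ, 0 < t → v t < 0 := by
    intro t ht
    have h1 : Real.exp (-t) < 1 := Real.exp_lt_one_iff.2 (by linarith)
    have h2 : 1 < Real.exp t := Real.one_lt_exp_iff.2 ht
    rw [hv]
    nlinarith [mul_pos hα (sub_pos.2 h1), mul_pos hβ (sub_pos.2 h2)]
  have hvpos : ∀ t : ℝ, t < 0 → 0 < v t := by
    intro t ht
    have h1 : 1 < Real.exp (-t) := Real.one_lt_exp_iff.2 (by linarith)
    have h2 : Real.exp t < 1 := Real.exp_lt_one_iff.2 ht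
    rw [hv]
    nlinarith [mul_pos hα (sub_pos.2 h1), mul_pos hβ (sub_pos.2 h2)]
  -- sign of denominator
  have hdenpos : ∀ t : ℝ, 0 < t → 0 < 1 - Real.exp (v t) := fun t ht =>
    sub_pos.2 (Real.exp_lt_one_iff.2 (hvneg t ht))
  have hdenneg : ∀ t : ℝ, t < 0 → 1 - Real.exp (v t) < 0 := fun t ht =>
    sub_neg.2 (Real.one_lt_exp_iff.2 (hvpos t ht))
  have hdenne : ∀ t : ℝ, t ≠ 0 → 1 - Real.exp (v t) ≠ 0 := by
    intro t ht
    rcases ht.lt_or_gt with h' | h'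
    · exact ne_of_lt (hdenneg t h')
    · exact ne_of_gt (hdenpos t h')
  -- auxiliary function F
  set F : ℝ → ℝ := fun t => Real.exp (v t) * (1 - t * w t) with hF
  have hdw : ∀ t, HasDerivAt w (α * Real.exp (-t) - β * Real.exp t) t := by
    intro t
    have h1 : HasDerivAt (fun s : ℝ => Real.exp (-s)) (-Real.exp (-t)) t := by
      simpa [Function.comp_def] using (Real.hasDerivAt_exp (-t)).comp t ((hasDerivAt_id t).neg)
    have := (((h1.const_mul α).const_sub (-2))).sub ((Real.hasDerivAt_exp t).const_mul β)
    exact this.congr_deriv (by ring)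
  have hdF : ∀ t, HasDerivAt F
      (-t * Real.exp (v t) * ((w t) ^ 2 + (α * Real.exp (-t) - β * Real.exp t))) t := by
    intro t
    have hg : HasDerivAt (fun s : ℝ => 1 - s * w s)
        (-(1 * w t + t * (α * Real.exp (-t) - β * Real.exp t))) t :=
      ((hasDerivAt_id t).mul (hdw t)).const_sub 1
    have := ((hdv t).exp).mul hg
    exact this.congr_deriv (by ring)
  have hwsq : ∀ t : ℝ, 0 < (w t) ^ 2 + (α * Real.exp (-t) - β * Real.exp t) := by
    intro t
    have ha : 0 < α * Real.exp (-t) := mul_pos hα (Real.exp_pos _)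
    have hb : 0 < β * Real.exp t := mul_pos hβ (Real.exp_pos _)
    simp only [hw]
    nlinarith [sq_nonneg (α * Real.exp (-t) - β * Real.exp t)]
  have hF0 : F 0 = 1 := by simp [hF, hv0]
  -- F < 1 away from 0
  have hFmono : StrictMonoOn F (Set.Iic 0) := by
    apply strictMonoOn_of_deriv_pos (convex_Iic 0)
      (fun t _ => ((hdF t).continuousAt).continuousWithinAt)
    intro t ht
    rw [interior_Iic] at ht
    rw [(hdF t).deriv]
    have ht' : t < 0 := ht
    exact mul_pos (mul_pos (by linarith) (Real.exp_pos _)) (hwsq t)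
  have hFanti : StrictAntiOn F (Set.Ici 0) := by
    apply strictAntiOn_of_deriv_neg (convex_Ici 0)
      (fun t _ => ((hdF t).continuousAt).continuousWithinAt)
    intro t ht
    rw [interior_Ici] at ht
    rw [(hdF t).deriv]
    have ht' : 0 < t := ht
    nlinarith [mul_pos (mul_pos ht' (Real.exp_pos (v t))) (hwsq t)]
  have hFlt : ∀ t : ℝ, t ≠ 0 → F t < 1 := by
    intro t ht
    rcases ht.lt_or_gt with h' | h'
    · have := hFmono (Set.mem_Iic.2 h'.le) (Set.mem_Iic.2 le_rfl) h'
      rwa [hF0] at this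
    · have := hFanti (Set.mem_Ici.2 le_rfl) (Set.mem_Ici.2 h'.le) h'
      rwa [hF0] at this
  -- derivative of f := t / (1 - exp (v t)) away from 0
  have hdf : ∀ t : ℝ, t ≠ 0 → HasDerivAt (fun s => s / (1 - Real.exp (v s)))
      ((1 - F t) / (1 - Real.exp (v t)) ^ 2) t := by
    intro t ht
    have hd : HasDerivAt (fun s => 1 - Real.exp (v s)) (-(Real.exp (v t) * w t)) t :=
      ((hdv t).exp).const_sub 1
    have := (hasDerivAt_id t).div hd (hdenne t ht)
    simp only [id_eq] at this
    exact this.congr_deriv (by simp only [hF, hw]; ring)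
  -- the extended function G
  set G : ℝ → ℝ := fun t => if t = 0 then (2 + α + β)⁻¹ else t / (1 - Real.exp (v t)) with hG
  have habp : 0 < 2 + α + β := by linarith
  have hGeq : ∀ t : ℝ, t ≠ 0 → G t = t / (1 - Real.exp (v t)) := by
    intro t ht; simp [hG, ht]
  have hGev : ∀ t : ℝ, t ≠ 0 → G =ᶠ[𝓝 t] fun s => s / (1 - Real.exp (v s)) := by
    intro t ht
    filter_upwards [isOpen_compl_singleton.mem_nhds (by simpa using ht : t ∈ ({(0:ℝ)}ᶜ))]
      with s hs
    exact hGeq s hs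
  have hdG : ∀ t : ℝ, t ≠ 0 → HasDerivAt G ((1 - F t) / (1 - Real.exp (v t)) ^ 2) t := by
    intro t ht
    exact (hdf t ht).congr_of_eventuallyEq (hGev t ht)
  -- continuity of G at 0
  have hG0 : ContinuousAt G 0 := by
    have hde : HasDerivAt (fun s => Real.exp (v s)) (-(2 + α + β)) 0 := by
      have := (hdv 0).exp
      convert this using 1
      simp only [hv0, hw, Real.exp_zero, neg_zero]
      ring
    rw [hasDerivAt_iff_tendsto_slope] at hde
    have hne : (-(2 + α + β) : ℝ) ≠ 0 := by linarith
    have h1 : Filter.Tendsto (fun s => -(slope (fun u => Real.exp (v u)) 0 s)⁻¹)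
        (𝓝[≠] (0:ℝ)) (𝓝 (-(-(2 + α + β))⁻¹)) := (hde.inv₀ hne).neg
    have h2 : Filter.Tendsto G (𝓝[≠] (0:ℝ)) (𝓝 (G 0)) := by
      have : G 0 = -(-(2 + α + β))⁻¹ := by
        rw [inv_neg, neg_neg]; simp [hG]
      rw [this]
      apply h1.congr'
      filter_upwards [self_mem_nhdsWithin] with s hs
      have hs0 : s ≠ 0 := hs
      show -(slope (fun u => Real.exp (v u)) 0 s)⁻¹ = G s
      rw [hGeq s hs0, slope_def_field, hv0, Real.exp_zero, sub_zero, inv_div,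
        show (1 : ℝ) - Real.exp (v s) = -(Real.exp (v s) - 1) by ring, div_neg]
    rw [ContinuousAt, ← nhdsNE_sup_pure 0]
    exact Filter.Tendsto.sup h2 (by simpa using tendsto_pure_nhds G 0)
  have hGcont : Continuous G := by
    rw [continuous_iff_continuousAt]
    intro t
    by_cases ht : t = 0
    · subst ht; exact hG0
    · exact ((hdG t ht).continuousAt)
  -- strict monotonicity of G
  have hGmono : StrictMono G := by
    have key : ∀ t : ℝ, t ≠ 0 → 0 < deriv G t := by
      intro t ht
      rw [(hdG t ht).deriv]
      exact div_pos (by linarith [hFlt t ht]) (pow_two_pos_of_ne_zero (hdenne t ht))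
    have key' : ∀ t : ℝ, t ≠ 0 → 0 < deriv G t := key
    have hm1 : StrictMonoOn G (Set.Iic 0) := by
      apply strictMonoOn_of_deriv_pos (convex_Iic 0) hGcont.continuousOn
      intro t ht
      rw [interior_Iic] at ht
      exact key t (ne_of_lt ht)
    have hm2 : StrictMonoOn G (Set.Ici 0) := by
      apply strictMonoOn_of_deriv_pos (convex_Ici 0) hGcont.continuousOn
      intro t ht
      rw [interior_Ici] at ht
      exact key t (ne_of_gt ht)
    exact hm1.Iic_union_Ici hm2
  -- positivity of G
  have hGpos : ∀ t : ℝ, t ≠ 0 → 0 < G t := by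
    intro t ht
    rw [hGeq t ht]
    rcases ht.lt_or_gt with h' | h'
    · exact div_pos_of_neg_of_neg h' (hdenneg t h')
    · exact div_pos h' (hdenpos t h')
  have hc : 0 < π / h := div_pos Real.pi_pos hh
  refine ⟨?_, ?_, ?_, ?_⟩
  · -- positivity
    intro t ht
    rw [hxh t, ← hGeq t ht]
    exact mul_pos hc (hGpos t ht)
  · -- strict monotonicity
    intro s hs t ht hst
    rw [hxh s, hxh t, ← hGeq s hs, ← hGeq t ht]
    exact (mul_lt_mul_iff_right₀ hc).2 (hGmono hst)
  · -- limit at -∞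
    have hbound : ∀ t : ℝ, t ≤ -1 → t / (1 - Real.exp (v t)) ≤ 2 * (-t) * Real.exp t := by
      intro t ht
      have ht0 : t < 0 := by linarith
      have hvt : -2 * t ≤ v t := by
        have h1 : 1 ≤ Real.exp (-t) := Real.one_le_exp (by linarith)
        have h2 : Real.exp t ≤ 1 := Real.exp_le_one_iff.2 (by linarith)
        rw [hv]
        nlinarith
      have hexp : Real.exp (-2 * t) ≤ Real.exp (v t) := Real.exp_le_exp.2 hvt
      have h2le : (2 : ℝ) ≤ Real.exp (-2 * t) := by
        calc (2:ℝ) ≤ -2 * t + 1 := by linarith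
        _ ≤ Real.exp (-2 * t) := by linarith [Real.add_one_le_exp (-2 * t)]
      have hE : Real.exp (-2 * t) / 2 ≤ Real.exp (v t) - 1 := by linarith
      have hEpos : 0 < Real.exp (v t) - 1 := by linarith
      have key : -t / (Real.exp (v t) - 1) ≤ -t / (Real.exp (-2 * t) / 2) := by
        apply div_le_div_of_nonneg_left (by linarith) (by linarith) hE
      have heq : -t / (Real.exp (-2 * t) / 2) = 2 * (-t) * Real.exp (2 * t) := by
        rw [show (-2 : ℝ) * t = -(2 * t) by ring, Real.exp_neg]
        field_simp
      have hfin : Real.exp (2 * t) ≤ Real.exp t := Real.exp_le_exp.2 (by linarith)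
      have : t / (1 - Real.exp (v t)) = -t / (Real.exp (v t) - 1) := by
        rw [← neg_sub, div_neg, neg_div]
      rw [this]
      calc -t / (Real.exp (v t) - 1) ≤ 2 * (-t) * Real.exp (2 * t) := by
            rw [← heq]; exact key
        _ ≤ 2 * (-t) * Real.exp t := by
            apply mul_le_mul_of_nonneg_left hfin (by linarith)
    have hlim : Filter.Tendsto (fun t : ℝ => 2 * (-t) * Real.exp t) Filter.atBot (𝓝 0) := by
      have h1 : Filter.Tendsto (fun x : ℝ => x ^ 1 * Real.exp (-x)) Filter.atTop (𝓝 0) :=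
        Real.tendsto_pow_mul_exp_neg_atTop_nhds_zero 1
      have h2 : Filter.Tendsto (fun t : ℝ => (-t) ^ 1 * Real.exp (-(-t))) Filter.atBot (𝓝 0) :=
        h1.comp Filter.tendsto_neg_atBot_atTop
      have h3 := h2.const_mul (2 : ℝ)
      simp only [pow_one, neg_neg, mul_zero] at h3
      convert h3 using 2
      ring
    have hf0 : Filter.Tendsto (fun t : ℝ => t / (1 - Real.exp (v t))) Filter.atBot (𝓝 0) := by
      apply tendsto_of_tendsto_of_tendsto_of_le_of_le' tendsto_const_nhds hlim
      · filter_upwards [Filter.eventually_le_atBot (-1 : ℝ)] with t ht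
        have ht0 : t < 0 := by linarith
        exact (div_pos_of_neg_of_neg ht0 (hdenneg t ht0)).le
      · filter_upwards [Filter.eventually_le_atBot (-1 : ℝ)] with t ht
        exact hbound t ht
    have := hf0.const_mul (π / h)
    rw [mul_zero] at this
    apply this.congr
    intro t
    rw [hxh t]
  · -- limit at +∞
    have hbound : ∀ t : ℝ, 1 ≤ t →
        t * Real.exp (v t) / (1 - Real.exp (v t)) ≤ 2 * t * Real.exp (-t) := by
      intro t ht
      have ht0 : 0 < t := by linarith
      have hvt : v t ≤ -2 * t := by
        have h1 : Real.exp (-t) ≤ 1 := Real.exp_le_one_iff.2 (by linarith)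
        have h2 : 1 ≤ Real.exp t := Real.one_le_exp (by linarith)
        rw [hv]
        nlinarith
      have hexp : Real.exp (v t) ≤ Real.exp (-2 * t) := Real.exp_le_exp.2 hvt
      have hhalf : Real.exp (-2 * t) ≤ 1 / 2 := by
        have h2le : (2 : ℝ) ≤ Real.exp (2 * t) := by
          calc (2:ℝ) ≤ 2 * t + 1 := by linarith
          _ ≤ Real.exp (2 * t) := by linarith [Real.add_one_le_exp (2 * t)]
        rw [show (-2 : ℝ) * t = -(2 * t) by ring, Real.exp_neg]
        rw [inv_le_comm₀ (by positivity) (by norm_num)]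
        linarith
      have hden : (1 : ℝ) / 2 ≤ 1 - Real.exp (v t) := by linarith
      have h1 : t * Real.exp (v t) / (1 - Real.exp (v t)) ≤ t * Real.exp (v t) / (1 / 2) := by
        apply div_le_div_of_nonneg_left (by positivity) (by norm_num) hden
      have h2 : t * Real.exp (v t) / (1 / 2) = 2 * t * Real.exp (v t) := by ring
      have h3 : Real.exp (v t) ≤ Real.exp (-t) := by
        apply Real.exp_le_exp.2
        linarith
      calc t * Real.exp (v t) / (1 - Real.exp (v t)) ≤ 2 * t * Real.exp (v t) := by
            rw [← h2]; exact h1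
        _ ≤ 2 * t * Real.exp (-t) := by
            apply mul_le_mul_of_nonneg_left h3 (by linarith)
    have hlim : Filter.Tendsto (fun t : ℝ => 2 * t * Real.exp (-t)) Filter.atTop (𝓝 0) := by
      have h1 : Filter.Tendsto (fun x : ℝ => x ^ 1 * Real.exp (-x)) Filter.atTop (𝓝 0) :=
        Real.tendsto_pow_mul_exp_neg_atTop_nhds_zero 1
      have h3 := h1.const_mul (2 : ℝ)
      simp only [pow_one, mul_zero] at h3
      convert h3 using 2
      ring
    have hf0 : Filter.Tendsto (fun t : ℝ => t * Real.exp (v t) / (1 - Real.exp (v t)))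
        Filter.atTop (𝓝 0) := by
      apply tendsto_of_tendsto_of_tendsto_of_le_of_le' tendsto_const_nhds hlim
      · filter_upwards [Filter.eventually_ge_atTop (1 : ℝ)] with t ht
        have ht0 : 0 < t := by linarith
        exact (div_nonneg (by positivity) (hdenpos t ht0).le)
      · filter_upwards [Filter.eventually_ge_atTop (1 : ℝ)] with t ht
        exact hbound t ht
    have hmul := hf0.const_mul (π / h)
    rw [mul_zero] at hmul
    apply hmul.congr'
    filter_upwards [Filter.eventually_ge_atTop (1 : ℝ)] with t ht
    have ht0 : t ≠ 0 := by intro hc; rw [hc] at ht; norm_num at ht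
    rw [hxh t]
    have hne := hdenne t ht0
    field_simp
    ring
end
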